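/- Convergence of Taylor's Taylor series (Banach algebra model): let f be an intertwiner-preserving function on block operator matrices, uniformly bounded by M on all block discs of radius r centered at 0. Fix 0 < r₀ < r₁ < r, set q := r₁/r₀ > 1. Then for every z with ‖z‖ < r₀, ‖Δⁿ f(0,…,0)(z,…,z)‖ ≤ q^{−n} M for all n, so the series ∑_{n≥0} Δⁿ f(0)(z,…,z) converges absolutely and uniformly on the disc of radius r₀. -/

import Mathlib

/-!
The scalar matrix `diag(1, c, …, cᵏ)` intertwines the bidiagonal matrices with superdiagonals
`c • u` and `u`, so reading off the `(0, k)` corner shows that `Δᵏf(d)(c u) = cᵏ Δᵏf(d)(u)`.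
For `c = r₁/r₀` the bidiagonal matrix with zero diagonal and superdiagonal `c z` has norm
`c‖z‖ < r₁ < r`, so its corner is bounded by `M`; dividing by `cⁿ` gives the geometric bound,
and the series is dominated by `∑ (r₀/r₁)ⁿ M`.
-/

attribute [local instance] Matrix.normedAddCommGroup

variable {A : Type*} [NormedRing A] [NormedAlgebra ℂ A]

/-- A block-scalar rectangular matrix: a scalar matrix amplified into the algebra `A`. -/
noncomputable def blkScalar {m n : ℕ} (A : Type*) [NormedRing A] [NormedAlgebra ℂ A]
    (s : Matrix (Fin m) (Fin n) ℂ) : Matrix (Fin m) (Fin n) A :=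
  s.map (algebraMap ℂ A)

/-- The `(k+1)×(k+1)` bidiagonal block matrix with diagonal `d` and superdiagonal `u`. -/
def bidiag (k : ℕ) (d : Fin (k + 1) → A) (u : Fin k → A) :
    Matrix (Fin (k + 1)) (Fin (k + 1)) A :=
  Matrix.of fun i j =>
    if (j : ℕ) = (i : ℕ) then d i
    else if h : (j : ℕ) = (i : ℕ) + 1 then u ⟨i, by have := j.isLt; omega⟩ else 0

/-- `Δᵏf(z₀,…,z_k)(u₁,…,u_k)`: the `(0,k)`-corner of `f` on the bidiagonal matrix. -/
def TaylorDelta (f : ∀ n : ℕ, Matrix (Fin n) (Fin n) A → Matrix (Fin n) (Fin n) A)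
    (k : ℕ) (d : Fin (k + 1) → A) (u : Fin k → A) : A :=
  f (k + 1) (bidiag k d u) 0 (Fin.last k)

def PreservesIntertwiners (f : ∀ n : ℕ, Matrix (Fin n) (Fin n) A → Matrix (Fin n) (Fin n) A) :
    Prop :=
  ∀ (m n : ℕ) (s : Matrix (Fin m) (Fin n) ℂ) (X : Matrix (Fin n) (Fin n) A)
    (Y : Matrix (Fin m) (Fin m) A),
    blkScalar A s * X = Y * blkScalar A s → blkScalar A s * f n X = f m Y * blkScalar A s

theorem blkScalar_diagonal {n : ℕ} (d : Fin n → ℂ) :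
    blkScalar A (Matrix.diagonal d) = Matrix.diagonal fun i => algebraMap ℂ A (d i) :=
  Matrix.diagonal_map (map_zero _)

theorem blkScalar_diagonal_pow_mul_bidiag {k : ℕ} (c : ℂ) (d : Fin (k + 1) → A) (u : Fin k → A) :
    blkScalar A (Matrix.diagonal fun i : Fin (k + 1) => c ^ (i : ℕ)) * bidiag k d (c • u) =
      bidiag k d u * blkScalar A (Matrix.diagonal fun i : Fin (k + 1) => c ^ (i : ℕ)) := by
  ext i j
  rw [blkScalar_diagonal, Matrix.diagonal_mul, Matrix.mul_diagonal]
  simp only [bidiag, Matrix.of_apply]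
  split_ifs with hdiag hsuper
  · rw [Algebra.commutes, hdiag]
  · rw [Pi.smul_apply, Algebra.smul_def, ← mul_assoc, ← map_mul, ← Algebra.commutes, hsuper,
      pow_succ]
  · simp

theorem TaylorDelta_smul {f : ∀ n : ℕ, Matrix (Fin n) (Fin n) A → Matrix (Fin n) (Fin n) A}
    (hf : PreservesIntertwiners f) (k : ℕ) (c : ℂ) (d : Fin (k + 1) → A) (u : Fin k → A) :
    TaylorDelta f k d (c • u) = c ^ k • TaylorDelta f k d u := by
  have hcorner := congrFun (congrFun (hf _ _ _ _ _ (blkScalar_diagonal_pow_mul_bidiag c d u)) 0)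
    (Fin.last k)
  rw [blkScalar_diagonal, Matrix.diagonal_mul, Matrix.mul_diagonal] at hcorner
  simp only [Fin.val_zero, pow_zero, map_one, one_mul, Fin.val_last] at hcorner
  rw [TaylorDelta, hcorner, ← Algebra.commutes, ← Algebra.smul_def, TaylorDelta]

theorem norm_TaylorDelta_le {R : Type*} [NormedRing R]
    (f : ∀ n : ℕ, Matrix (Fin n) (Fin n) R → Matrix (Fin n) (Fin n) R)
    (k : ℕ) (d : Fin (k + 1) → R) (u : Fin k → R) :
    ‖TaylorDelta f k d u‖ ≤ ‖f (k + 1) (bidiag k d u)‖ :=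
  Matrix.norm_entry_le_entrywise_sup_norm (f (k + 1) (bidiag k d u))

theorem norm_bidiag_le {R : Type*} [NormedRing R] {k : ℕ} {C : ℝ} (hC : 0 ≤ C)
    {d : Fin (k + 1) → R} {u : Fin k → R} (hd : ∀ i, ‖d i‖ ≤ C) (hu : ∀ i, ‖u i‖ ≤ C) :
    ‖bidiag k d u‖ ≤ C := by
  rw [Matrix.norm_le_iff hC]
  intro i j
  simp only [bidiag, Matrix.of_apply]
  split_ifs
  · exact hd i
  · exact hu _
  · simpa using hC

theorem norm_TaylorDelta_zero_le
    {f : ∀ n : ℕ, Matrix (Fin n) (Fin n) A → Matrix (Fin n) (Fin n) A}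
    (hf : PreservesIntertwiners f) {r M : ℝ}
    (hbdd : ∀ (n : ℕ) (X : Matrix (Fin n) (Fin n) A), ‖X‖ < r → ‖f n X‖ ≤ M)
    {c : ℝ} (hc : 0 < c) {z : A} (hz : c * ‖z‖ < r) (k : ℕ) :
    ‖TaylorDelta f k (fun _ => 0) (fun _ => z)‖ ≤ c⁻¹ ^ k * M := by
  have hbidiag : ‖bidiag k (fun _ => 0) ((c : ℂ) • fun _ => z)‖ < r := by
    refine lt_of_le_of_lt (norm_bidiag_le (by positivity) (fun _ => ?_) (fun _ => ?_)) hz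
    · rw [norm_zero]
      positivity
    · rw [Pi.smul_apply, norm_smul, Complex.norm_real, Real.norm_of_nonneg hc.le]
  have hscaled : c ^ k * ‖TaylorDelta f k (fun _ => 0) (fun _ => z)‖ ≤ M := by
    calc c ^ k * ‖TaylorDelta f k (fun _ => 0) (fun _ => z)‖
        = ‖TaylorDelta f k (fun _ => 0) ((c : ℂ) • fun _ => z)‖ := by
          rw [TaylorDelta_smul hf, norm_smul, norm_pow, Complex.norm_real,
            Real.norm_of_nonneg hc.le]
      _ ≤ M := (norm_TaylorDelta_le f k _ _).trans (hbdd _ _ hbidiag)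
  rw [inv_pow, inv_mul_eq_div, le_div_iff₀' (pow_pos hc k)]
  exact hscaled

/-- Convergence of Taylor's Taylor series (part of Theorem 5.11(2) of the paper): if the
intertwiner-preserving family `f` is bounded by `M` on all block discs of radius `r`
centered at `0` and `0 < r₀ < r₁ < r`, then for `‖z‖ < r₀` one has
`‖Δⁿf(0)(z,…,z)‖ ≤ (r₀/r₁)ⁿ·M` for every `n`, so the series `∑ₙ Δⁿf(0)(z,…,z)` converges
absolutely. -/
theorem stmt10
    (f : ∀ n : ℕ, Matrix (Fin n) (Fin n) A → Matrix (Fin n) (Fin n) A)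
    (hf : ∀ (m n : ℕ) (s : Matrix (Fin m) (Fin n) ℂ)
        (X : Matrix (Fin n) (Fin n) A) (Y : Matrix (Fin m) (Fin m) A),
      blkScalar A s * X = Y * blkScalar A s →
      blkScalar A s * f n X = f m Y * blkScalar A s)
    (r M r₀ r₁ : ℝ) (h0 : 0 < r₀) (h01 : r₀ < r₁) (h1r : r₁ < r)
    (hbdd : ∀ (n : ℕ) (X : Matrix (Fin n) (Fin n) A), ‖X‖ < r → ‖f n X‖ ≤ M)
    (z : A) (hz : ‖z‖ < r₀) :
    (∀ n : ℕ, ‖TaylorDelta f n (fun _ => 0) (fun _ => z)‖ ≤ (r₀ / r₁) ^ n * M) ∧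
    Summable (fun n : ℕ => ‖TaylorDelta f n (fun _ => 0) (fun _ => z)‖) := by
  have hr₁ : 0 < r₁ := h0.trans h01
  have hscaled : r₁ / r₀ * ‖z‖ < r := calc
    r₁ / r₀ * ‖z‖ < r₁ / r₀ * r₀ := by gcongr
    _ = r₁ := div_mul_cancel₀ r₁ h0.ne'
    _ < r := h1r
  have hgeom : ∀ n : ℕ, ‖TaylorDelta f n (fun _ => 0) (fun _ => z)‖ ≤ (r₀ / r₁) ^ n * M := by
    intro n
    simpa only [inv_div] using norm_TaylorDelta_zero_le hf hbdd (div_pos hr₁ h0) hscaled n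
  refine ⟨hgeom, Summable.of_nonneg_of_le (fun _ => norm_nonneg _) hgeom ?_⟩
  exact (summable_geometric_of_lt_one (div_pos h0 hr₁).le ((div_lt_one hr₁).mpr h01)).mul_right M
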